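/- Every two-dimensional linear subspace of ℂ² ⊗ ℂ² contains at least one nonzero product vector, i.e. a nonzero vector of the form φ ⊗ ψ with φ, ψ ∈ ℂ². -/

import Mathlib

set_option maxHeartbeats 1000000
set_option synthInstance.maxHeartbeats 1000000

open scoped TensorProduct

noncomputable def BT : Module.Basis (Fin 2 × Fin 2) ℂ ((Fin 2 → ℂ) ⊗[ℂ] (Fin 2 → ℂ)) :=
  (Pi.basisFun ℂ (Fin 2)).tensorProduct (Pi.basisFun ℂ (Fin 2))

lemma BT_repr_tmul (φ ψ : Fin 2 → ℂ) (i j : Fin 2) :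
    BT.repr (φ ⊗ₜ[ℂ] ψ) (i, j) = φ i * ψ j := by
  simp [BT, Module.Basis.tensorProduct_repr_tmul_apply]; ring

lemma eq_tmul_of_repr (t : (Fin 2 → ℂ) ⊗[ℂ] (Fin 2 → ℂ)) (φ ψ : Fin 2 → ℂ)
    (h : ∀ i j : Fin 2, BT.repr t (i, j) = φ i * ψ j) : t = φ ⊗ₜ[ℂ] ψ := by
  apply BT.repr.injective
  ext ⟨i, j⟩
  rw [BT_repr_tmul]
  exact h i j

lemma quad_root (a b c : ℂ) (ha : a ≠ 0) : ∃ s : ℂ, a * s ^ 2 + b * s + c = 0 := by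
  obtain ⟨d, hd⟩ := IsAlgClosed.exists_pow_nat_eq (b ^ 2 - 4 * a * c) zero_lt_two
  refine ⟨(-b + d) / (2 * a), ?_⟩
  field_simp
  linear_combination hd

lemma product_of_det (t : (Fin 2 → ℂ) ⊗[ℂ] (Fin 2 → ℂ))
    (h : BT.repr t (0,0) * BT.repr t (1,1) = BT.repr t (0,1) * BT.repr t (1,0)) :
    ∃ φ ψ : Fin 2 → ℂ, t = φ ⊗ₜ[ℂ] ψ := by
  by_cases h0 : BT.repr t (0,0) = 0
  · rw [h0, zero_mul] at h
    rcases mul_eq_zero.mp h.symm with h1 | h1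
    · refine ⟨![0, 1], ![BT.repr t (1,0), BT.repr t (1,1)], eq_tmul_of_repr _ _ _ ?_⟩
      simp only [Fin.forall_fin_two, Matrix.cons_val_zero, Matrix.cons_val_one,
        Matrix.head_cons]
      refine ⟨⟨?_, ?_⟩, ?_, ?_⟩
      · rw [zero_mul]; exact h0
      · rw [zero_mul]; exact h1
      · rw [one_mul]
      · rw [one_mul]
    · refine ⟨![BT.repr t (0,1), BT.repr t (1,1)], ![0, 1], eq_tmul_of_repr _ _ _ ?_⟩
      simp only [Fin.forall_fin_two, Matrix.cons_val_zero, Matrix.cons_val_one,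
        Matrix.head_cons]
      refine ⟨⟨?_, ?_⟩, ?_, ?_⟩
      · rw [mul_zero]; exact h0
      · rw [mul_one]
      · rw [mul_zero]; exact h1
      · rw [mul_one]
  · refine ⟨![BT.repr t (0,0), BT.repr t (1,0)],
      ![1, BT.repr t (0,1) / BT.repr t (0,0)], eq_tmul_of_repr _ _ _ ?_⟩
    simp only [Fin.forall_fin_two, Matrix.cons_val_zero, Matrix.cons_val_one,
      Matrix.head_cons]
    refine ⟨⟨?_, ?_⟩, ?_, ?_⟩
    · rw [mul_one]
    · rw [mul_div_assoc', mul_div_cancel_left₀ _ h0]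
    · rw [mul_one]
    · rw [mul_div_assoc', eq_div_iff h0]
      linear_combination h

theorem two_dim_subspace_contains_product_vector
    (W : Submodule ℂ ((Fin 2 → ℂ) ⊗[ℂ] (Fin 2 → ℂ)))
    (hW : Module.finrank ℂ W = 2) :
    ∃ (φ ψ : Fin 2 → ℂ), φ ⊗ₜ[ℂ] ψ ∈ W ∧ φ ⊗ₜ[ℂ] ψ ≠ 0 := by
  classical
  haveI hfree : Module.Free ℂ W := Module.Free.of_divisionRing ℂ W
  haveI hfin : FiniteDimensional ℂ W := Module.finite_of_finrank_eq_succ hW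
  have bW : Module.Basis (Fin 2) ℂ W := Module.finBasisOfFinrankEq ℂ W hW
  set u : (Fin 2 → ℂ) ⊗[ℂ] (Fin 2 → ℂ) := ↑(bW 0) with hu
  set v : (Fin 2 → ℂ) ⊗[ℂ] (Fin 2 → ℂ) := ↑(bW 1) with hv
  by_cases hA : BT.repr v (0,0) * BT.repr v (1,1) - BT.repr v (0,1) * BT.repr v (1,0) = 0
  · have hdet : BT.repr v (0,0) * BT.repr v (1,1) = BT.repr v (0,1) * BT.repr v (1,0) := by
      linear_combination hA
    obtain ⟨φ, ψ, hφψ⟩ := product_of_det v hdet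
    have hvW : v ∈ W := (bW 1).2
    have hvne : v ≠ 0 := by
      intro h0
      exact bW.ne_zero 1 (Subtype.ext (by simpa [hv] using h0))
    exact ⟨φ, ψ, hφψ ▸ hvW, hφψ ▸ hvne⟩
  · obtain ⟨s, hs⟩ := quad_root
      (BT.repr v (0,0) * BT.repr v (1,1) - BT.repr v (0,1) * BT.repr v (1,0))
      (BT.repr u (0,0) * BT.repr v (1,1) + BT.repr v (0,0) * BT.repr u (1,1)
        - BT.repr u (0,1) * BT.repr v (1,0) - BT.repr v (0,1) * BT.repr u (1,0))
      (BT.repr u (0,0) * BT.repr u (1,1) - BT.repr u (0,1) * BT.repr u (1,0)) hA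
    set t : (Fin 2 → ℂ) ⊗[ℂ] (Fin 2 → ℂ) := u + s • v with ht
    have htW : t ∈ W := W.add_mem (bW 0).2 (W.smul_mem s (bW 1).2)
    have htne : t ≠ 0 := by
      intro h0
      rw [ht, hu, hv] at h0
      have hz : (bW 0) + s • (bW 1) = (0 : W) := by
        apply Subtype.ext
        simpa using h0
      have := congrArg (fun w => bW.repr w 0) hz
      simp [Module.Basis.repr_self, Finsupp.single_apply] at this
    have hdet : BT.repr t (0,0) * BT.repr t (1,1) = BT.repr t (0,1) * BT.repr t (1,0) := by
      have expand : ∀ p : Fin 2 × Fin 2, BT.repr t p = BT.repr u p + s * BT.repr v p := by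
        intro p; simp [ht, map_add, map_smul]
      rw [expand, expand, expand, expand]
      linear_combination hs
    obtain ⟨φ, ψ, hφψ⟩ := product_of_det t hdet
    exact ⟨φ, ψ, hφψ ▸ htW, hφψ ▸ htne⟩
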